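/- arXiv:math/0405483 — 6 statements merged into one kernel-verified Lean document; each statement's English description precedes it below -/
import Mathlib

section
/- Let γ : [a,b] → ℝ^N be an injective continuous curve of finite total curvature. For ξ < η in [a,b], let T_{ξη} = (γ(η) - γ(ξ))/‖γ(η) - γ(ξ)‖ denote the unit chord direction. If a < x ≤ y < b, then the angle between T_{ax} and T_{yb} is at most the total curvature of γ restricted to the open interval (a,b). -/
open Set Filter


/-- Sum of exterior angles of the inscribed polygon with vertices `γ (t 0), …, γ (t (n+1))`,
the angles being taken at the `n` interior vertices. -/
noncomputable def polySum {E : Type*} [NormedAddCommGroup E] [InnerProductSpace ℝ E]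
    (γ : ℝ → E) {n : ℕ} (t : Fin (n + 2) → ℝ) : ℝ :=
  ∑ i : Fin n, InnerProductGeometry.angle
    (γ (t i.castSucc.succ) - γ (t i.castSucc.castSucc))
    (γ (t i.succ.succ) - γ (t i.castSucc.succ))

/-- The set of angle–sums of polygons inscribed in `γ` with vertices in `s`. -/
def polySums {E : Type*} [NormedAddCommGroup E] [InnerProductSpace ℝ E]
    (γ : ℝ → E) (s : Set ℝ) : Set ℝ :=
  {A | ∃ (n : ℕ) (t : Fin (n + 2) → ℝ), StrictMono t ∧ (∀ i, t i ∈ s) ∧ A = polySum γ t}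

/-- Total curvature of `γ` on the parameter set `s` : the supremum of the angle sums
of inscribed polygons with vertices in `s`. -/
noncomputable def totalCurvatureOn {E : Type*} [NormedAddCommGroup E] [InnerProductSpace ℝ E]
    (γ : ℝ → E) (s : Set ℝ) : ℝ :=
  sSup (polySums γ s)

/-- Cyclic angle sum for a closed (period-one) curve: vertices `γ (t 0), …, γ (t n)` within one
period, the chords taken cyclically (`Fin (n+1)` addition wraps around). -/
noncomputable def closedPolySum {E : Type*} [NormedAddCommGroup E] [InnerProductSpace ℝ E]
    (γ : ℝ → E) {n : ℕ} (t : Fin (n + 1) → ℝ) : ℝ :=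
  ∑ i : Fin (n + 1), InnerProductGeometry.angle
    (γ (t (i + 1)) - γ (t i)) (γ (t (i + 1 + 1)) - γ (t (i + 1)))

/-- Angle sums of closed polygons inscribed in a period-one closed curve `γ`. -/
def closedPolySums {E : Type*} [NormedAddCommGroup E] [InnerProductSpace ℝ E]
    (γ : ℝ → E) : Set ℝ :=
  {A | ∃ (n : ℕ) (t : Fin (n + 1) → ℝ), StrictMono t ∧ t (Fin.last n) < t 0 + 1 ∧
    A = closedPolySum γ t}

/-- Total curvature of a closed (period-one) curve. -/
noncomputable def closedTotalCurvature {E : Type*} [NormedAddCommGroup E]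
    [InnerProductSpace ℝ E] (γ : ℝ → E) : ℝ :=
  sSup (closedPolySums γ)

/-!
For `a < a' < x` and `y < b' < b`, the triangle inequality for angles bounds the angle between
the chords `γ a' γ x` and `γ y γ b'` by the exterior-angle sum of the inscribed polygon
`a' < x < y < b'` (or `a' < x < b'` when `x = y`), hence by the total curvature on `(a, b)`.
Letting `a' → a` and `b' → b` gives the claim, since `γ` is continuous and, by injectivity,
the limiting chords are nonzero, where the angle is continuous.
-/

open InnerProductGeometry Topology

section InscribedPolygons

variable {E : Type*} [NormedAddCommGroup E] [InnerProductSpace ℝ E] {γ : ℝ → E} {s : Set ℝ}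

lemma polySum_le_totalCurvatureOn (hfin : BddAbove (polySums γ s)) {n : ℕ}
    {t : Fin (n + 2) → ℝ} (ht : StrictMono t) (hts : ∀ i, t i ∈ s) :
    polySum γ t ≤ totalCurvatureOn γ s :=
  le_csSup hfin ⟨n, t, ht, hts, rfl⟩

lemma angle_le_totalCurvatureOn (hfin : BddAbove (polySums γ s)) {p q r : ℝ}
    (hpq : p < q) (hqr : q < r) (hp : p ∈ s) (hq : q ∈ s) (hr : r ∈ s) :
    angle (γ q - γ p) (γ r - γ q) ≤ totalCurvatureOn γ s := by
  have hsum : polySum γ ![p, q, r] = angle (γ q - γ p) (γ r - γ q) := by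
    simp [polySum]
  rw [← hsum]
  refine polySum_le_totalCurvatureOn hfin ?_ ?_
  · simp [Fin.strictMono_iff_lt_succ, Fin.forall_fin_two, hpq, hqr]
  · simp [Fin.forall_fin_succ, hp, hq, hr]

lemma angle_add_angle_le_totalCurvatureOn (hfin : BddAbove (polySums γ s)) {p q r u : ℝ}
    (hpq : p < q) (hqr : q < r) (hru : r < u) (hp : p ∈ s) (hq : q ∈ s) (hr : r ∈ s)
    (hu : u ∈ s) :
    angle (γ q - γ p) (γ r - γ q) + angle (γ r - γ q) (γ u - γ r) ≤ totalCurvatureOn γ s := by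
  have hsum : polySum γ ![p, q, r, u] =
      angle (γ q - γ p) (γ r - γ q) + angle (γ r - γ q) (γ u - γ r) := by
    simp [polySum, Fin.sum_univ_two]
  rw [← hsum]
  refine polySum_le_totalCurvatureOn hfin ?_ ?_
  · simp [Fin.strictMono_iff_lt_succ, Fin.forall_fin_succ, hpq, hqr, hru]
  · simp [Fin.forall_fin_succ, hp, hq, hr, hu]

lemma angle_chords_le_totalCurvatureOn (hfin : BddAbove (polySums γ s)) {p x y q : ℝ}
    (hpx : p < x) (hxy : x ≤ y) (hyq : y < q) (hp : p ∈ s) (hx : x ∈ s) (hy : y ∈ s)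
    (hq : q ∈ s) :
    angle (γ x - γ p) (γ q - γ y) ≤ totalCurvatureOn γ s := by
  rcases hxy.eq_or_lt with rfl | hxy
  · exact angle_le_totalCurvatureOn hfin hpx hyq hp hx hq
  · exact (angle_le_angle_add_angle _ (γ y - γ x) _).trans
      (angle_add_angle_le_totalCurvatureOn hfin hpx hxy hyq hp hx hy hq)

end InscribedPolygons

lemma angle_chords_le_of_forall_Ioo {E : Type*} [NormedAddCommGroup E] [InnerProductSpace ℝ E]
    {γ : ℝ → E} {a b x y C : ℝ} (hax : a < x) (hyb : y < b)
    (ha : ContinuousWithinAt γ (Ioi a) a) (hb : ContinuousWithinAt γ (Iio b) b)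
    (hxa : γ x ≠ γ a) (hby : γ b ≠ γ y)
    (h : ∀ p ∈ Ioo a x, ∀ q ∈ Ioo y b, angle (γ x - γ p) (γ q - γ y) ≤ C) :
    angle (γ x - γ a) (γ b - γ y) ≤ C := by
  have hchords : Tendsto (fun pq : ℝ × ℝ => (γ x - γ pq.1, γ pq.2 - γ y))
      (𝓝[>] a ×ˢ 𝓝[<] b) (𝓝 (γ x - γ a, γ b - γ y)) :=
    (tendsto_const_nhds.sub (ha.tendsto.comp tendsto_fst)).prodMk_nhds
      ((hb.tendsto.comp tendsto_snd).sub tendsto_const_nhds)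
  have hlim := (continuousAt_angle (x := (γ x - γ a, γ b - γ y)) (sub_ne_zero.2 hxa)
    (sub_ne_zero.2 hby)).tendsto.comp hchords
  refine le_of_tendsto hlim ?_
  filter_upwards [prod_mem_prod (Ioo_mem_nhdsGT hax) (Ioo_mem_nhdsLT hyb)] with pq hpq
  exact h _ hpq.1 _ hpq.2

theorem angle_chords_le_totalCurvature_general {N : ℕ} (a b : ℝ)
    (γ : ℝ → EuclideanSpace ℝ (Fin N))
    (hcont : ContinuousOn γ (Set.Icc a b))
    (hinj : Set.InjOn γ (Set.Icc a b))
    (hfin : BddAbove (polySums γ (Set.Ioo a b)))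
    (x y : ℝ) (hax : a < x) (hxy : x ≤ y) (hyb : y < b) :
    InnerProductGeometry.angle (γ x - γ a) (γ b - γ y) ≤
      totalCurvatureOn γ (Set.Ioo a b) := by
  have hab : a < b := (hax.trans_le hxy).trans hyb
  have haI : a ∈ Icc a b := left_mem_Icc.2 hab.le
  have hbI : b ∈ Icc a b := right_mem_Icc.2 hab.le
  have hxI : x ∈ Icc a b := ⟨hax.le, hxy.trans hyb.le⟩
  have hyI : y ∈ Icc a b := ⟨hax.le.trans hxy, hyb.le⟩
  refine angle_chords_le_of_forall_Ioo hax hyb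
    ((hcont a haI).mono_of_mem_nhdsWithin (Icc_mem_nhdsGT hab))
    ((hcont b hbI).mono_of_mem_nhdsWithin (Icc_mem_nhdsLT hab))
    (fun h => hax.ne' (hinj hxI haI h)) (fun h => hyb.ne (hinj hyI hbI h.symm)) ?_
  rintro p ⟨hap, hpx⟩ q ⟨hyq, hqb⟩
  exact angle_chords_le_totalCurvatureOn hfin hpx hxy hyq ⟨hap, by linarith⟩
    ⟨hax, by linarith⟩ ⟨by linarith, hyb⟩ ⟨by linarith, hqb⟩

/-- Chord-angle lemma: if `γ : [a,b] → ℝ^N` is an injective continuous curve of finite total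
curvature and `a < x ≤ y < b`, then the angle between the chord directions
`T_{ax} = (γ x - γ a)/‖γ x - γ a‖` and `T_{yb} = (γ b - γ y)/‖γ b - γ y‖` is at most the
total curvature of `γ` restricted to the open interval `(a, b)`.
(The angle between two nonzero vectors is unchanged by normalization.) -/
theorem angle_chords_le_totalCurvature {N : ℕ} (a b : ℝ) (hab : a < b)
    (γ : ℝ → EuclideanSpace ℝ (Fin N))
    (hcont : ContinuousOn γ (Set.Icc a b))
    (hinj : Set.InjOn γ (Set.Icc a b))
    (hfin : BddAbove (polySums γ (Set.Ioo a b)))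
    (x y : ℝ) (hax : a < x) (hxy : x ≤ y) (hyb : y < b) :
    InnerProductGeometry.angle (γ x - γ a) (γ b - γ y) ≤
      totalCurvatureOn γ (Set.Ioo a b) :=
  angle_chords_le_totalCurvature_general a b γ hcont hinj hfin x y hax hxy hyb
end

section
/- Let γ : [A,B] → ℝ^N be an injective continuous curve of finite total curvature. Then for every a ∈ [A,B), the strong one-sided tangent T⁺(a) = lim_{a ≤ x < y, y → a} (γ(y) - γ(x))/‖γ(y) - γ(x)‖ exists; similarly for every b ∈ (A,B] the left strong tangent T₋(b) = lim_{x < y ≤ b, x → b} (γ(y) - γ(x))/‖γ(y) - γ(x)‖ exists. -/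
/-
Total curvature is superadditive over consecutive parameter intervals, so finite total curvature
forces the curvature of `(a, c]` to tend to `0` as `c ↓ a`. For `a < x < y < z < w ≤ c`, the unit
chords of `[x, y]` and `[z, w]` are at most the angle between those chords apart, and that angle is
at most the sum of the two exterior angles of the inscribed polygon `x, y, z, w`. Hence the unit
chords near `a` form a Cauchy family; continuity at `a` admits chords starting at `a` itself.
Left tangents follow by reversing the parameter.
-/

open Set Filter

open InnerProductGeometry NormedSpace Topology

theorem exists_tendsto_of_forall_exists_eventually_dist_le {α X : Type*} [PseudoMetricSpace X]
    [CompleteSpace X] {l : Filter α} [l.NeBot] {f : α → X}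
    (h : ∀ ε > 0, ∃ v, ∀ᶠ q in l, dist (f q) v ≤ ε) : ∃ T, Tendsto f l (𝓝 T) := by
  refine cauchy_map_iff_exists_tendsto.mp (Metric.cauchy_iff.mpr ⟨inferInstance, fun ε hε => ?_⟩)
  obtain ⟨v, hv⟩ := h (ε / 3) (by positivity)
  refine ⟨f '' {q | dist (f q) v ≤ ε / 3}, image_mem_map hv, ?_⟩
  rintro _ ⟨p, hp, rfl⟩ _ ⟨q, hq, rfl⟩
  linarith [dist_triangle_right (f p) (f q) v, hp.out, hq.out]

section

variable {V : Type*} [NormedAddCommGroup V] [InnerProductSpace ℝ V]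

theorem dist_normalize_le_angle {x y : V} (hx : x ≠ 0) (hy : y ≠ 0) :
    dist (normalize x) (normalize y) ≤ angle x y := by
  have hθ : angle (normalize x) (normalize y) = angle x y := by
    rw [angle_normalize_left, angle_normalize_right]
  have hsq := norm_sub_sq_eq_norm_sq_add_norm_sq_sub_two_mul_norm_mul_norm_mul_cos_angle
    (normalize x) (normalize y)
  rw [norm_normalize hx, norm_normalize hy, hθ] at hsq
  have hcos := Real.one_sub_sq_div_two_le_cos (x := angle x y)
  rw [dist_eq_norm]
  nlinarith [angle_nonneg x y, norm_nonneg (normalize x - normalize y)]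

/-- `polySum` with the vertices `t 0, …, t (n + 1)` indexed by `ℕ`, so that polygons are easily
concatenated. -/
noncomputable def natPolySum (γ : ℝ → V) (n : ℕ) (t : ℕ → ℝ) : ℝ :=
  ∑ i ∈ Finset.range n, angle (γ (t (i + 1)) - γ (t i)) (γ (t (i + 2)) - γ (t (i + 1)))

theorem polySum_natCast (γ : ℝ → V) (n : ℕ) (t : ℕ → ℝ) :
    polySum γ (fun i : Fin (n + 2) => t i) = natPolySum γ n t := by
  simp [polySum, natPolySum, Finset.sum_range, add_assoc]

theorem mem_polySums_iff {γ : ℝ → V} {s : Set ℝ} {σ : ℝ} :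
    σ ∈ polySums γ s ↔ ∃ (n : ℕ) (t : ℕ → ℝ), (∀ i ≤ n, t i < t (i + 1)) ∧
      (∀ i ≤ n + 1, t i ∈ s) ∧ σ = natPolySum γ n t := by
  constructor
  · rintro ⟨n, u, hu, hus, rfl⟩
    refine ⟨n, fun i => u (Fin.ofNat _ i), fun i hi => hu ?_, fun i _ => hus _, ?_⟩
    · rw [Fin.lt_def, Fin.val_ofNat, Fin.val_ofNat, Nat.mod_eq_of_lt (by omega),
        Nat.mod_eq_of_lt (by omega)]
      omega
    · rw [← polySum_natCast]
      simp only [Fin.ofNat_val_eq_self]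
  · rintro ⟨n, t, ht, hts, rfl⟩
    refine ⟨n, fun i => t i, Fin.strictMono_iff_lt_succ.mpr fun i => ?_, fun i => hts i (by omega),
      (polySum_natCast γ n t).symm⟩
    simpa using ht i (by omega)

theorem polySums_mono (γ : ℝ → V) {s s' : Set ℝ} (h : s ⊆ s') :
    polySums γ s ⊆ polySums γ s' := by
  rintro σ ⟨n, t, ht, hts, rfl⟩
  exact ⟨n, t, ht, fun i => h (hts i), rfl⟩

theorem natPolySum_add_le_append (γ : ℝ → V) (n m : ℕ) (t u : ℕ → ℝ) :
    natPolySum γ n t + natPolySum γ m u ≤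
      natPolySum γ (n + 2 + m) (fun i => if i < n + 2 then t i else u (i - (n + 2))) := by
  simp only [natPolySum]
  rw [Finset.sum_range_add]
  apply add_le_add
  · refine le_trans (le_of_eq (Finset.sum_congr rfl fun i hi => ?_))
      (Finset.sum_le_sum_of_subset_of_nonneg (Finset.range_mono (by omega))
        fun _ _ _ => angle_nonneg _ _)
    have hi := Finset.mem_range.mp hi
    simp [show i < n + 2 by omega, show i + 1 < n + 2 by omega, show i + 2 < n + 2 by omega]
  · refine le_of_eq (Finset.sum_congr rfl fun i _ => ?_)
    have h : ∀ k, n + 2 ≤ k → (if k < n + 2 then t k else u (k - (n + 2))) = u (k - (n + 2)) :=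
      fun k hk => if_neg (by omega)
    rw [h _ (by omega), h _ (by omega), h _ (by omega)]
    simp only [add_assoc, Nat.add_sub_add_left, Nat.add_sub_cancel_left]

theorem exists_add_le_of_mem_polySums {γ : ℝ → V} {s₁ s₂ : Set ℝ}
    (hs : ∀ x ∈ s₁, ∀ y ∈ s₂, x < y) {σ₁ σ₂ : ℝ} (hσ₁ : σ₁ ∈ polySums γ s₁)
    (hσ₂ : σ₂ ∈ polySums γ s₂) : ∃ σ ∈ polySums γ (s₁ ∪ s₂), σ₁ + σ₂ ≤ σ := by
  obtain ⟨n, t, ht, hts, rfl⟩ := mem_polySums_iff.mp hσ₁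
  obtain ⟨m, u, hu, hus, rfl⟩ := mem_polySums_iff.mp hσ₂
  refine ⟨_, mem_polySums_iff.mpr ⟨n + 2 + m, _, fun i hi => ?_, fun i hi => ?_, rfl⟩,
    natPolySum_add_le_append γ n m t u⟩
  · rcases lt_trichotomy (i + 1) (n + 2) with h | h | h
    · simpa [h, show i < n + 2 by omega] using ht i (by omega)
    · simpa [h, show i < n + 2 by omega] using
        hs _ (hts i (by omega)) _ (hus 0 (Nat.zero_le _))
    · simpa [show ¬ i < n + 2 by omega, show ¬ i + 1 < n + 2 by omega,
        show i + 1 - (n + 2) = i - (n + 2) + 1 by omega] using hu _ (by omega)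
  · by_cases h : i < n + 2
    · simpa [h] using Or.inl (hts i (by omega))
    · simpa [h] using Or.inr (hus _ (by omega))

theorem exists_mem_polySums_inter_Ici {γ : ℝ → V} {s : Set ℝ} {σ : ℝ}
    (hσ : σ ∈ polySums γ s) : ∃ c ∈ s, σ ∈ polySums γ (s ∩ Ici c) := by
  obtain ⟨n, t, ht, hts, rfl⟩ := hσ
  exact ⟨t 0, hts 0, n, t, ht, fun i => ⟨hts i, ht.monotone (Fin.zero_le i)⟩, rfl⟩

theorem angle_add_angle_mem_polySums (γ : ℝ → V) {s : Set ℝ} [s.OrdConnected] {x y z w : ℝ}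
    (hx : x ∈ s) (hw : w ∈ s) (hxy : x < y) (hyz : y < z) (hzw : z < w) :
    angle (γ y - γ x) (γ z - γ y) + angle (γ z - γ y) (γ w - γ z) ∈ polySums γ s := by
  refine ⟨2, ![x, y, z, w], Fin.strictMono_iff_lt_succ.mpr fun i => ?_, fun i => ?_, ?_⟩
  · fin_cases i <;> simpa
  · fin_cases i
    exacts [hx, Set.Icc_subset s hx hw ⟨hxy.le, (hyz.trans hzw).le⟩,
      Set.Icc_subset s hx hw ⟨(hxy.trans hyz).le, hzw.le⟩, hw]
  · simp [polySum, Fin.sum_univ_two]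

theorem polySums_comp_neg_subset (γ : ℝ → V) (s : Set ℝ) :
    polySums (fun u => γ (-u)) s ⊆ polySums γ (-s) := by
  rintro σ ⟨n, t, ht, hts, rfl⟩
  refine ⟨n, fun i => -t i.rev, fun i j hij => neg_lt_neg (ht (Fin.rev_lt_rev.mpr hij)),
    fun i => by simpa using hts i.rev, ?_⟩
  rw [polySum, polySum, ← Equiv.sum_comp Fin.revPerm]
  refine Finset.sum_congr rfl fun i _ => ?_
  simp only [Fin.revPerm_apply, Fin.rev_castSucc, Fin.rev_succ, Fin.succ_castSucc]
  rw [angle_comm, ← angle_neg_neg, neg_sub, neg_sub]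

theorem exists_mem_polySums_dist_normalize_le {γ : ℝ → V} {s : Set ℝ} [s.OrdConnected]
    (hinj : InjOn γ s) {x y z w : ℝ} (hx : x ∈ s) (hw : w ∈ s) (hxy : x < y) (hyz : y < z)
    (hzw : z < w) :
    ∃ σ ∈ polySums γ s, dist (normalize (γ y - γ x)) (normalize (γ w - γ z)) ≤ σ := by
  have hy : y ∈ s := Set.Icc_subset s hx hw ⟨hxy.le, (hyz.trans hzw).le⟩
  have hz : z ∈ s := Set.Icc_subset s hx hw ⟨(hxy.trans hyz).le, hzw.le⟩
  refine ⟨_, angle_add_angle_mem_polySums γ hx hw hxy hyz hzw, ?_⟩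
  exact (dist_normalize_le_angle (sub_ne_zero.mpr (hinj.ne hy hx hxy.ne'))
    (sub_ne_zero.mpr (hinj.ne hw hz hzw.ne'))).trans (angle_le_angle_add_angle _ _ _)

theorem exists_polySums_Ioc_le {γ : ℝ → V} {a b : ℝ} (hab : a < b)
    (hfin : BddAbove (polySums γ (Ioc a b))) {ε : ℝ} (hε : 0 < ε) :
    ∃ c ∈ Ioc a b, ∀ σ ∈ polySums γ (Ioc a c), σ ≤ ε := by
  by_contra! hlarge
  have hgrow : ∀ k : ℕ, ∀ c ∈ Ioc a b, ∃ σ ∈ polySums γ (Ioc a c), (k + 1) * ε ≤ σ := by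
    intro k
    induction k with
    | zero =>
      intro c hc
      obtain ⟨σ, hσ, hεσ⟩ := hlarge c hc
      exact ⟨σ, hσ, by simpa using hεσ.le⟩
    | succ k ih =>
      -- follow a polygon from `(a, (a + d) / 2]` by one of angle sum `> ε` in `[d, c]`
      intro c hc
      obtain ⟨σ₂, hσ₂, hεσ₂⟩ := hlarge c hc
      obtain ⟨d, hd, hσ₂d⟩ := exists_mem_polySums_inter_Ici hσ₂
      obtain ⟨σ₁, hσ₁, hkσ₁⟩ := ih ((a + d) / 2) ⟨by linarith [hd.1], by linarith [hd.2, hc.2]⟩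
      obtain ⟨σ, hσ, hσ₁₂⟩ := exists_add_le_of_mem_polySums
        (fun x hx y hy => by linarith [hx.2, hy.2.out, hd.1]) hσ₁ hσ₂d
      refine ⟨σ, polySums_mono γ ?_ hσ, by push_cast; linarith⟩
      rintro x (hx | hx)
      · exact ⟨hx.1, by linarith [hx.2, hd.1, hd.2]⟩
      · exact hx.1
  obtain ⟨M, hM⟩ := hfin
  obtain ⟨k, hk⟩ := exists_nat_gt (M / ε)
  obtain ⟨σ, hσ, hkσ⟩ := hgrow k b ⟨hab, le_rfl⟩
  have hσM := hM hσ
  rw [div_lt_iff₀ hε] at hk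
  linarith

variable [CompleteSpace V]

theorem exists_tendsto_normalize_chord_right {γ : ℝ → V} {a b : ℝ} (hab : a < b)
    (hcont : ContinuousWithinAt γ (Ioc a b) a) (hinj : InjOn γ (Icc a b))
    (hfin : BddAbove (polySums γ (Ioc a b))) :
    ∃ T, Tendsto (fun q : ℝ × ℝ => normalize (γ q.2 - γ q.1))
      (𝓝[{q | a ≤ q.1 ∧ q.1 < q.2 ∧ q.2 ≤ b}] (a, a)) (𝓝 T) := by
  have : (𝓝[{q : ℝ × ℝ | a ≤ q.1 ∧ q.1 < q.2 ∧ q.2 ≤ b}] (a, a)).NeBot := by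
    refine (tendsto_nhdsWithin_iff.mpr ⟨?_, ?_⟩ :
      Tendsto (fun y => (a, y)) (𝓝[>] a) _).neBot
    · exact ((continuous_const.prodMk continuous_id).tendsto' a (a, a) rfl).mono_left
        nhdsWithin_le_nhds
    · filter_upwards [Ioc_mem_nhdsGT hab] with y hy
      exact ⟨le_rfl, hy.1, hy.2⟩
  refine exists_tendsto_of_forall_exists_eventually_dist_le fun ε hε => ?_
  obtain ⟨c, hc, hsmall⟩ := exists_polySums_Ioc_le hab hfin hε
  have haz : a < (a + c) / 2 := by linarith [hc.1]
  have hzc : (a + c) / 2 < c := by linarith [hc.1]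
  set z := (a + c) / 2
  set v := normalize (γ c - γ z)
  have hinterior : ∀ x y, a < x → x < y → y < z → dist (normalize (γ y - γ x)) v ≤ ε := by
    intro x y hax hxy hyz
    obtain ⟨σ, hσ, hle⟩ := exists_mem_polySums_dist_normalize_le
      (hinj.mono (Ioc_subset_Icc_self.trans (Icc_subset_Icc_right hc.2)))
      ⟨hax, by linarith⟩ ⟨hax.trans (hxy.trans (hyz.trans hzc)), le_rfl⟩ hxy hyz hzc
    exact hle.trans (hsmall σ hσ)
  have hendpoint : ∀ y, a < y → y < z → dist (normalize (γ y - γ a)) v ≤ ε := by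
    intro y hay hyz
    have hchord : γ y - γ a ≠ 0 :=
      sub_ne_zero.mpr (hinj.ne ⟨hay.le, by linarith [hc.2]⟩ ⟨le_rfl, hab.le⟩ hay.ne')
    have hγ : Tendsto (fun x => γ y - γ x) (𝓝[>] a) (𝓝 (γ y - γ a)) :=
      tendsto_const_nhds.sub (by rw [← nhdsWithin_Ioc_eq_nhdsGT hab]; exact hcont)
    have hlim : Tendsto (fun x => normalize (γ y - γ x)) (𝓝[>] a)
        (𝓝 (normalize (γ y - γ a))) :=
      (hγ.norm.inv₀ (norm_ne_zero_iff.mpr hchord)).smul hγ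
    refine le_of_tendsto (hlim.dist tendsto_const_nhds) ?_
    filter_upwards [Ioo_mem_nhdsGT hay] with x hx
    exact hinterior x y hx.1 hx.2 hyz
  have hnear : ∀ᶠ q : ℝ × ℝ in 𝓝 (a, a), q.2 < z :=
    continuous_snd.continuousAt.eventually_lt continuousAt_const haz
  refine ⟨v, ?_⟩
  filter_upwards [self_mem_nhdsWithin, nhdsWithin_le_nhds hnear] with q ⟨hq1, hq12, _⟩ hqz
  rcases hq1.eq_or_lt with h | h
  · rw [← h] at hq12 ⊢
    exact hendpoint q.2 hq12 hqz
  · exact hinterior q.1 q.2 h hq12 hqz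

theorem exists_tendsto_normalize_chord_left {γ : ℝ → V} {a b : ℝ} (hab : a < b)
    (hcont : ContinuousWithinAt γ (Ico a b) b) (hinj : InjOn γ (Icc a b))
    (hfin : BddAbove (polySums γ (Ico a b))) :
    ∃ T, Tendsto (fun q : ℝ × ℝ => normalize (γ q.2 - γ q.1))
      (𝓝[{q | a ≤ q.1 ∧ q.1 < q.2 ∧ q.2 ≤ b}] (b, b)) (𝓝 T) := by
  have hmaps : ∀ s : Set ℝ, MapsTo Neg.neg (-s) s := fun s u hu => hu
  obtain ⟨T, hT⟩ := exists_tendsto_normalize_chord_right (γ := fun u => γ (-u)) (neg_lt_neg hab)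
    (hcont.comp_of_eq continuous_neg.continuousWithinAt (by simpa using hmaps (Ico a b))
      (neg_neg b))
    (hinj.comp neg_injective.injOn (by simpa using hmaps (Icc a b)))
    (hfin.mono ((polySums_comp_neg_subset γ _).trans_eq (by rw [neg_Ioc, neg_neg, neg_neg])))
  have hflip : Tendsto (fun q : ℝ × ℝ => (-q.2, -q.1))
      (𝓝[{q | a ≤ q.1 ∧ q.1 < q.2 ∧ q.2 ≤ b}] (b, b))
      (𝓝[{q | -b ≤ q.1 ∧ q.1 < q.2 ∧ q.2 ≤ -a}] (-b, -b)) := by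
    refine tendsto_nhdsWithin_iff.mpr ⟨?_, ?_⟩
    · exact ((continuous_snd.neg.prodMk continuous_fst.neg).tendsto' (b, b) (-b, -b) rfl).mono_left
        nhdsWithin_le_nhds
    · filter_upwards [self_mem_nhdsWithin] with q ⟨h1, h12, h2⟩
      exact ⟨neg_le_neg h2, neg_lt_neg h12, neg_le_neg h1⟩
  refine ⟨-T, (hT.comp hflip).neg.congr fun q => ?_⟩
  simp [← normalize_neg]

end

theorem strong_one_sided_tangents_exist_general {N : ℕ} (A B : ℝ)
    (γ : ℝ → EuclideanSpace ℝ (Fin N))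
    (hcont : ContinuousOn γ (Set.Icc A B))
    (hinj : Set.InjOn γ (Set.Icc A B))
    (hfin : BddAbove (polySums γ (Set.Icc A B))) :
    (∀ a ∈ Set.Ico A B, ∃ T : EuclideanSpace ℝ (Fin N),
      Filter.Tendsto (fun q : ℝ × ℝ => ‖γ q.2 - γ q.1‖⁻¹ • (γ q.2 - γ q.1))
        (nhdsWithin (a, a) {q : ℝ × ℝ | a ≤ q.1 ∧ q.1 < q.2 ∧ q.2 ≤ B})
        (nhds T)) ∧
    (∀ b ∈ Set.Ioc A B, ∃ T : EuclideanSpace ℝ (Fin N),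
      Filter.Tendsto (fun q : ℝ × ℝ => ‖γ q.2 - γ q.1‖⁻¹ • (γ q.2 - γ q.1))
        (nhdsWithin (b, b) {q : ℝ × ℝ | A ≤ q.1 ∧ q.1 < q.2 ∧ q.2 ≤ b})
        (nhds T)) := by
  constructor
  · rintro a ⟨hAa, haB⟩
    have hsub : Icc a B ⊆ Icc A B := Icc_subset_Icc_left hAa
    exact exists_tendsto_normalize_chord_right haB
      ((hcont a ⟨hAa, haB.le⟩).mono (Ioc_subset_Icc_self.trans hsub)) (hinj.mono hsub)
      (hfin.mono (polySums_mono γ (Ioc_subset_Icc_self.trans hsub)))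
  · rintro b ⟨hAb, hbB⟩
    have hsub : Icc A b ⊆ Icc A B := Icc_subset_Icc_right hbB
    exact exists_tendsto_normalize_chord_left hAb
      ((hcont b ⟨hAb.le, hbB⟩).mono (Ico_subset_Icc_self.trans hsub)) (hinj.mono hsub)
      (hfin.mono (polySums_mono γ (Ico_subset_Icc_self.trans hsub)))

/-- Existence of strong one-sided tangents: if `γ : [A,B] → ℝ^N` is an injective continuous
curve of finite total curvature, then for every `a ∈ [A,B)` the strong right tangent
`T⁺(a) = lim_{a ≤ x < y, y → a} (γ y - γ x)/‖γ y - γ x‖` exists, and for every `b ∈ (A,B]`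
the strong left tangent `T₋(b) = lim_{x < y ≤ b, x → b} (γ y - γ x)/‖γ y - γ x‖` exists. -/
theorem strong_one_sided_tangents_exist {N : ℕ} (A B : ℝ) (hAB : A < B)
    (γ : ℝ → EuclideanSpace ℝ (Fin N))
    (hcont : ContinuousOn γ (Set.Icc A B))
    (hinj : Set.InjOn γ (Set.Icc A B))
    (hfin : BddAbove (polySums γ (Set.Icc A B))) :
    (∀ a ∈ Set.Ico A B, ∃ T : EuclideanSpace ℝ (Fin N),
      Filter.Tendsto (fun q : ℝ × ℝ => ‖γ q.2 - γ q.1‖⁻¹ • (γ q.2 - γ q.1))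
        (nhdsWithin (a, a) {q : ℝ × ℝ | a ≤ q.1 ∧ q.1 < q.2 ∧ q.2 ≤ B})
        (nhds T)) ∧
    (∀ b ∈ Set.Ioc A B, ∃ T : EuclideanSpace ℝ (Fin N),
      Filter.Tendsto (fun q : ℝ × ℝ => ‖γ q.2 - γ q.1‖⁻¹ • (γ q.2 - γ q.1))
        (nhdsWithin (b, b) {q : ℝ × ℝ | A ≤ q.1 ∧ q.1 < q.2 ∧ q.2 ≤ b})
        (nhds T)) :=
  strong_one_sided_tangents_exist_general A B γ hcont hinj hfin
end

section
/- Let γ : [A,B] → ℝ^N be an injective continuous curve of finite total curvature. Then the right strong tangent T⁺(x) converges to T⁺(a) as x → a from the right, and the left strong tangent T₋(x) converges to T⁺(a) as x → a from the right. -/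
open Set Filter


/-- One-sided continuity of the strong one-sided tangents: if `γ : [A,B] → ℝ^N` is an injective
continuous curve of finite total curvature and `T⁺`, `T₋` denote its strong right and left
tangents (given here by their defining limit properties), then `T⁺(x) → T⁺(a)` and
`T₋(x) → T⁺(a)` as `x → a` from the right. -/
theorem one_sided_tangents_converge {N : ℕ} (A B : ℝ) (hAB : A < B)
    (γ : ℝ → EuclideanSpace ℝ (Fin N))
    (hcont : ContinuousOn γ (Set.Icc A B))
    (hinj : Set.InjOn γ (Set.Icc A B))
    (hfin : BddAbove (polySums γ (Set.Icc A B)))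
    (Tp Tm : ℝ → EuclideanSpace ℝ (Fin N))
    (hTp : ∀ c ∈ Set.Ico A B,
      Filter.Tendsto (fun q : ℝ × ℝ => ‖γ q.2 - γ q.1‖⁻¹ • (γ q.2 - γ q.1))
        (nhdsWithin (c, c) {q : ℝ × ℝ | c ≤ q.1 ∧ q.1 < q.2 ∧ q.2 ≤ B})
        (nhds (Tp c)))
    (hTm : ∀ c ∈ Set.Ioc A B,
      Filter.Tendsto (fun q : ℝ × ℝ => ‖γ q.2 - γ q.1‖⁻¹ • (γ q.2 - γ q.1))
        (nhdsWithin (c, c) {q : ℝ × ℝ | A ≤ q.1 ∧ q.1 < q.2 ∧ q.2 ≤ c})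
        (nhds (Tm c)))
    (a : ℝ) (ha : a ∈ Set.Ico A B) :
    Filter.Tendsto Tp (nhdsWithin a (Set.Ioo a B)) (nhds (Tp a)) ∧
    Filter.Tendsto Tm (nhdsWithin a (Set.Ioo a B)) (nhds (Tp a)) := by
  obtain ⟨hAa, haB⟩ := ha
  have key : ∀ ε > 0, ∀ᶠ x in nhdsWithin a (Set.Ioo a B),
      dist (Tp x) (Tp a) ≤ ε ∧ dist (Tm x) (Tp a) ≤ ε := by
    intro ε hε
    obtain ⟨δ, hδ, hδ'⟩ := (Metric.tendsto_nhdsWithin_nhds.mp (hTp a ⟨hAa, haB⟩)) ε hε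
    filter_upwards [self_mem_nhdsWithin,
      nhdsWithin_le_nhds (Metric.ball_mem_nhds a (half_pos hδ))] with x hx hxd
    obtain ⟨hax, hxB⟩ := hx
    rw [Metric.mem_ball] at hxd
    have hdxx : dist ((x : ℝ), x) ((a : ℝ), a) < δ / 2 := by
      rw [Prod.dist_eq]; simpa using hxd
    constructor
    · -- the right tangent at x
      set l := nhdsWithin ((x : ℝ), x) {q : ℝ × ℝ | x ≤ q.1 ∧ q.1 < q.2 ∧ q.2 ≤ B} with hl
      have hmap : Filter.Tendsto (fun y : ℝ => ((x : ℝ), y)) (nhdsWithin x (Set.Ioo x B)) l := by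
        rw [tendsto_nhdsWithin_iff]
        refine ⟨Filter.Tendsto.prodMk_nhds tendsto_const_nhds
          (tendsto_id.mono_right nhdsWithin_le_nhds), ?_⟩
        filter_upwards [self_mem_nhdsWithin] with y hy
        exact ⟨le_refl _, hy.1, hy.2.le⟩
      haveI : (nhdsWithin x (Set.Ioo x B)).NeBot := by
        rw [← mem_closure_iff_nhdsWithin_neBot, closure_Ioo hxB.ne]
        exact ⟨le_refl _, hxB.le⟩
      haveI : l.NeBot := hmap.neBot
      have hev : ∀ᶠ q in l, dist (‖γ q.2 - γ q.1‖⁻¹ • (γ q.2 - γ q.1)) (Tp a) ≤ ε := by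
        filter_upwards [self_mem_nhdsWithin,
          nhdsWithin_le_nhds (Metric.ball_mem_nhds ((x : ℝ), x) (half_pos hδ))] with q hq hqd
        rw [Metric.mem_ball] at hqd
        refine (hδ' ⟨le_trans hax.le hq.1, hq.2.1, hq.2.2⟩ ?_).le
        calc dist q ((a : ℝ), a) ≤ dist q ((x : ℝ), x) + dist ((x : ℝ), x) ((a : ℝ), a) :=
              dist_triangle _ _ _
          _ < δ / 2 + δ / 2 := add_lt_add hqd hdxx
          _ = δ := add_halves δ
      exact le_of_tendsto ((hTp x ⟨le_trans hAa hax.le, hxB⟩).dist tendsto_const_nhds) hev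
    · -- the left tangent at x
      set l := nhdsWithin ((x : ℝ), x) {q : ℝ × ℝ | A ≤ q.1 ∧ q.1 < q.2 ∧ q.2 ≤ x} with hl
      have hmap : Filter.Tendsto (fun y : ℝ => (y, (x : ℝ))) (nhdsWithin x (Set.Ioo a x)) l := by
        rw [tendsto_nhdsWithin_iff]
        refine ⟨Filter.Tendsto.prodMk_nhds
          (tendsto_id.mono_right nhdsWithin_le_nhds) tendsto_const_nhds, ?_⟩
        filter_upwards [self_mem_nhdsWithin] with y hy
        exact ⟨le_trans hAa hy.1.le, hy.2, le_refl _⟩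
      haveI : (nhdsWithin x (Set.Ioo a x)).NeBot := by
        rw [← mem_closure_iff_nhdsWithin_neBot, closure_Ioo hax.ne]
        exact ⟨hax.le, le_refl _⟩
      haveI : l.NeBot := hmap.neBot
      have hr : (0 : ℝ) < min (δ / 2) (x - a) := lt_min (half_pos hδ) (sub_pos.mpr hax)
      have hev : ∀ᶠ q in l, dist (‖γ q.2 - γ q.1‖⁻¹ • (γ q.2 - γ q.1)) (Tp a) ≤ ε := by
        filter_upwards [self_mem_nhdsWithin,
          nhdsWithin_le_nhds (Metric.ball_mem_nhds ((x : ℝ), x) hr)] with q hq hqd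
        rw [Metric.mem_ball] at hqd
        have hq1 : dist q.1 x < min (δ / 2) (x - a) := by
          refine lt_of_le_of_lt ?_ hqd
          rw [Prod.dist_eq]; exact le_max_left _ _
        have haq1 : a ≤ q.1 := by
          have := lt_of_lt_of_le hq1 (min_le_right _ _)
          rw [Real.dist_eq, abs_lt] at this
          linarith [this.1]
        refine (hδ' ⟨haq1, hq.2.1, le_trans hq.2.2 hxB.le⟩ ?_).le
        calc dist q ((a : ℝ), a) ≤ dist q ((x : ℝ), x) + dist ((x : ℝ), x) ((a : ℝ), a) :=
              dist_triangle _ _ _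
          _ < δ / 2 + δ / 2 := add_lt_add (lt_of_lt_of_le hqd (min_le_left _ _)) hdxx
          _ = δ := add_halves δ
      exact le_of_tendsto ((hTm x ⟨lt_of_le_of_lt hAa hax, hxB.le⟩).dist tendsto_const_nhds) hev
  constructor
  · rw [Metric.tendsto_nhds]
    intro ε hε
    filter_upwards [key (ε / 2) (half_pos hε)] with x hx
    exact lt_of_le_of_lt hx.1 (half_lt_self hε)
  · rw [Metric.tendsto_nhds]
    intro ε hε
    filter_upwards [key (ε / 2) (half_pos hε)] with x hx
    exact lt_of_le_of_lt hx.2 (half_lt_self hε)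
end

section
/- Let Γ be a compact connected (closed) curve in ℝ^N with finite total curvature. Then Γ has finite length; quantitatively, c_N · Length(Γ) ≤ diam(Γ) · TotalCurvature(Γ) where c_N > 0 is a constant depending only on N. (It suffices to prove the statement for closed curves: the total variation of t ↦ γ(t)·u is at most diam(Γ) times the number of local extrema of γ(t)·u, and one averages over unit vectors u using the Crofton and Milnor formulas.) -/
open Set Filter


/-!
Cut an inscribed polygon into consecutive pieces along which every edge stays within angle `π/3`
of the first edge of its piece (this holds as long as the turning accumulated inside the piece is
at most `π/3`). All edges of such a piece have inner product at least half their length with the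
unit vector of its first edge, so the piece is at most twice as long as the distance between its
endpoints, hence at most `2 · diam Γ`. Every piece but the last turns by more than `π/3`, so there
are at most `1 + 3K/π` pieces, and every inscribed polygon has length at most
`2 · diam Γ + (6/π) · diam Γ · K`. Finally, a nonconstant closed curve has `K ≥ 2π`, already
realised by an inscribed 2-gon, which absorbs the additive term: `c_N = π/7` works in every
dimension.
-/

open InnerProductGeometry Real
open scoped RealInnerProductSpace

section Polygon

variable {V : Type*} [NormedAddCommGroup V] [InnerProductSpace ℝ V]

theorem cos_mul_sum_norm_le_norm_sum {ι : Type*} (s : Finset ι) (v : ι → V) {w : V}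
    (hw : w ≠ 0) {θ : ℝ} (hθ : θ ≤ π) (h : ∀ i ∈ s, angle w (v i) ≤ θ) :
    cos θ * ∑ i ∈ s, ‖v i‖ ≤ ‖∑ i ∈ s, v i‖ := by
  have hterm : ∀ i ∈ s, ‖w‖ * (cos θ * ‖v i‖) ≤ ⟪w, v i⟫ := fun i hi => by
    rw [← cos_angle_mul_norm_mul_norm]
    have := cos_le_cos_of_nonneg_of_le_pi (angle_nonneg _ _) hθ (h i hi)
    nlinarith [mul_nonneg (norm_nonneg w) (norm_nonneg (v i))]
  refine le_of_mul_le_mul_left ?_ (norm_pos_iff.2 hw)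
  calc ‖w‖ * (cos θ * ∑ i ∈ s, ‖v i‖) = ∑ i ∈ s, ‖w‖ * (cos θ * ‖v i‖) := by
        rw [Finset.mul_sum, Finset.mul_sum]
    _ ≤ ∑ i ∈ s, ⟪w, v i⟫ := Finset.sum_le_sum hterm
    _ = ⟪w, ∑ i ∈ s, v i⟫ := (inner_sum _ _ _).symm
    _ ≤ ‖w‖ * ‖∑ i ∈ s, v i‖ := real_inner_le_norm _ _

theorem angle_le_sum_range_angle (v : ℕ → V) (h0 : v 0 ≠ 0) (j : ℕ) :
    angle (v 0) (v j) ≤ ∑ i ∈ Finset.range j, angle (v i) (v (i + 1)) := by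
  induction j with
  | zero => simp [angle_self h0]
  | succ j ih =>
    rw [Finset.sum_range_succ]
    linarith [angle_le_angle_add_angle (v 0) (v j) (v (j + 1))]

/-- The exterior angles of the polygonal chain `p 0, p 1, …` at its vertices `p 1, …, p m`. -/
noncomputable def chainAngleSum (p : ℕ → V) (m : ℕ) : ℝ :=
  ∑ i ∈ Finset.range m, angle (p (i + 1) - p i) (p (i + 2) - p (i + 1))

theorem chainAngleSum_nonneg (p : ℕ → V) (m : ℕ) : 0 ≤ chainAngleSum p m :=
  Finset.sum_nonneg fun _ _ => angle_nonneg _ _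

theorem chainAngleSum_mono (p : ℕ → V) {m m' : ℕ} (h : m ≤ m') :
    chainAngleSum p m ≤ chainAngleSum p m' :=
  Finset.sum_le_sum_of_subset_of_nonneg (Finset.range_subset_range.2 h)
    fun _ _ _ => angle_nonneg _ _

theorem chainAngleSum_congr {p q : ℕ → V} {m : ℕ} (h : ∀ i ≤ m + 1, p i = q i) :
    chainAngleSum p m = chainAngleSum q m :=
  Finset.sum_congr rfl fun i hi => by
    have := Finset.mem_range.1 hi
    rw [h i (by omega), h (i + 1) (by omega), h (i + 2) (by omega)]

theorem chainAngleSum_add (p : ℕ → V) (k j : ℕ) :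
    chainAngleSum p (k + j) = chainAngleSum p k + chainAngleSum (fun i => p (k + i)) j :=
  Finset.sum_range_add _ k j

theorem sum_dist_le_of_chainAngleSum_le (p : ℕ → V) {k : ℕ} (h01 : p 1 ≠ p 0)
    (hk : chainAngleSum p k ≤ π / 3) :
    ∑ i ∈ Finset.range (k + 1), dist (p (i + 1)) (p i) ≤ 2 * dist (p (k + 1)) (p 0) := by
  set v : ℕ → V := fun i => p (i + 1) - p i
  have hangle : ∀ i ∈ Finset.range (k + 1), angle (v 0) (v i) ≤ π / 3 := fun i hi =>
    calc angle (v 0) (v i) ≤ chainAngleSum p i := angle_le_sum_range_angle v (sub_ne_zero.2 h01) i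
      _ ≤ chainAngleSum p k := chainAngleSum_mono p (by simpa [Nat.lt_succ_iff] using hi)
      _ ≤ π / 3 := hk
  have := cos_mul_sum_norm_le_norm_sum _ v (sub_ne_zero.2 h01) (by linarith [pi_pos]) hangle
  rw [cos_pi_div_three, Finset.sum_range_sub p] at this
  simp only [dist_eq_norm]
  linarith

theorem exists_prefix_sum_dist_le (p : ℕ → V) (m : ℕ) {D : ℝ}
    (hD : ∀ i j, dist (p i) (p j) ≤ D) :
    ∃ k ≤ m, ∑ i ∈ Finset.range (k + 1), dist (p (i + 1)) (p i) ≤ 2 * D ∧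
      (k < m → ∑ i ∈ Finset.range (k + 1), dist (p (i + 1)) (p i) ≤
        6 / π * D * chainAngleSum p (k + 1)) := by
  have hD0 : 0 ≤ D := (dist_self (p 0)).symm.le.trans (hD 0 0)
  by_cases h01 : p 1 = p 0
  · have hzero : ∑ i ∈ Finset.range (0 + 1), dist (p (i + 1)) (p i) = 0 := by simp [h01]
    refine ⟨0, Nat.zero_le m, by linarith, fun _ => ?_⟩
    rw [hzero]
    have := chainAngleSum_nonneg p 1
    positivity
  classical
  -- the first piece ends at the first vertex where the turning exceeds `π / 3`
  have hex : ∃ k, k = m ∨ π / 3 < chainAngleSum p (k + 1) := ⟨m, .inl rfl⟩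
  have hshort : chainAngleSum p (Nat.find hex) ≤ π / 3 := by
    rcases Nat.eq_zero_or_eq_succ_pred (Nat.find hex) with h | h
    · rw [h, chainAngleSum, Finset.sum_range_zero]
      positivity
    · rw [h]
      exact not_lt.1 fun hlt => Nat.find_min hex (Nat.pred_lt_self (by omega)) (.inr hlt)
  have hprefix := sum_dist_le_of_chainAngleSum_le p h01 hshort
  refine ⟨Nat.find hex, Nat.find_min' hex (.inl rfl), ?_, fun hlt => ?_⟩
  · linarith [hD (Nat.find hex + 1) 0]
  · have hlong : π / 3 < chainAngleSum p (Nat.find hex + 1) :=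
      (Nat.find_spec hex).resolve_left hlt.ne
    calc ∑ i ∈ Finset.range (Nat.find hex + 1), dist (p (i + 1)) (p i)
        ≤ 2 * D := by linarith [hD (Nat.find hex + 1) 0]
      _ = 6 / π * D * (π / 3) := by field_simp; ring
      _ ≤ 6 / π * D * chainAngleSum p (Nat.find hex + 1) := by gcongr

theorem sum_dist_le_chainAngleSum (p : ℕ → V) (m : ℕ) {D : ℝ}
    (hD : ∀ i j, dist (p i) (p j) ≤ D) :
    ∑ i ∈ Finset.range (m + 1), dist (p (i + 1)) (p i) ≤
      2 * D + 6 / π * D * chainAngleSum p m := by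
  induction m using Nat.strong_induction_on generalizing p with
  | _ m ih =>
  have hD0 : 0 ≤ D := (dist_self (p 0)).symm.le.trans (hD 0 0)
  obtain ⟨k, hkm, hprefix, hlong⟩ := exists_prefix_sum_dist_le p m hD
  rcases hkm.eq_or_lt with rfl | hk
  · have : 0 ≤ 6 / π * D * chainAngleSum p k := by
      have := chainAngleSum_nonneg p k
      positivity
    linarith
  obtain ⟨j, rfl⟩ : ∃ j, m = k + 1 + j := ⟨m - (k + 1), by omega⟩
  have hsuffix := ih j (by omega) (fun i => p (k + 1 + i)) fun _ _ => hD _ _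
  simp only [← add_assoc] at hsuffix
  rw [show k + 1 + j + 1 = k + 1 + (j + 1) by ring, Finset.sum_range_add, chainAngleSum_add,
    mul_add]
  linarith [hlong hk]

end Polygon

section Curve

open Fin.NatCast

variable {E : Type*} [NormedAddCommGroup E] [InnerProductSpace ℝ E] {γ : ℝ → E}

/-- The cast `ℕ → Fin (n + 1)` reduces mod `n + 1`, so this reads the vertices cyclically. -/
theorem closedPolySum_eq_chainAngleSum {n : ℕ} (t : Fin (n + 1) → ℝ) :
    closedPolySum γ t = chainAngleSum (fun i : ℕ => γ (t i)) (n + 1) := by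
  rw [closedPolySum, chainAngleSum, ← Fin.sum_univ_eq_sum_range]
  refine Finset.sum_congr rfl fun i _ => ?_
  simp only [Nat.cast_add, Nat.cast_one, Nat.cast_ofNat, Fin.cast_val_eq_self]
  rw [add_assoc, one_add_one_eq_two]

theorem chainAngleSum_le_closedTotalCurvature (hper : Function.Periodic γ 1)
    (hbdd : BddAbove (closedPolySums γ)) {u : ℕ → ℝ} {m : ℕ}
    (hu : StrictMonoOn u (Iic (m + 1))) (hwrap : u (m + 1) ≤ u 0 + 1) :
    chainAngleSum (γ ∘ u) m ≤ closedTotalCurvature γ := by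
  have hmono : ∀ n ≤ m + 1, StrictMono fun i : Fin (n + 1) => u i := fun n hn a b hab =>
    hu (mem_Iic.2 (by omega)) (mem_Iic.2 (by omega)) hab
  -- if `u (m + 1) = u 0 + 1`, the last vertex repeats the first one and is left out
  rcases hwrap.lt_or_eq with hlt | heq
  · have hmem : closedPolySum γ (fun i : Fin (m + 1 + 1) => u i) ∈ closedPolySums γ :=
      ⟨m + 1, _, hmono _ le_rfl, hlt, rfl⟩
    calc chainAngleSum (γ ∘ u) m
        = chainAngleSum (fun i : ℕ => γ (u ((i : Fin (m + 1 + 1)) : ℕ))) m :=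
          chainAngleSum_congr fun i hi => by
            rw [Function.comp_apply, Fin.val_natCast, Nat.mod_eq_of_lt (by omega)]
      _ ≤ chainAngleSum (fun i : ℕ => γ (u ((i : Fin (m + 1 + 1)) : ℕ))) (m + 1 + 1) :=
          chainAngleSum_mono _ (by omega)
      _ = closedPolySum γ (fun i : Fin (m + 1 + 1) => u i) := by
          rw [closedPolySum_eq_chainAngleSum]
      _ ≤ closedTotalCurvature γ := le_csSup hbdd hmem
  · have hlast : u m < u 0 + 1 :=
      heq ▸ hu (mem_Iic.2 (by omega)) (mem_Iic.2 le_rfl) (Nat.lt_succ_self m)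
    have hmem : closedPolySum γ (fun i : Fin (m + 1) => u i) ∈ closedPolySums γ :=
      ⟨m, _, hmono _ (by omega), by simpa using hlast, rfl⟩
    calc chainAngleSum (γ ∘ u) m
        = chainAngleSum (fun i : ℕ => γ (u ((i : Fin (m + 1)) : ℕ))) m := by
          refine chainAngleSum_congr fun i hi => ?_
          rcases hi.lt_or_eq with hi | rfl
          · rw [Function.comp_apply, Fin.val_natCast, Nat.mod_eq_of_lt (by omega)]
          · rw [Function.comp_apply, Fin.val_natCast, Nat.mod_self, heq, hper]
      _ ≤ chainAngleSum (fun i : ℕ => γ (u ((i : Fin (m + 1)) : ℕ))) (m + 1) :=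
          chainAngleSum_mono _ (by omega)
      _ = closedPolySum γ (fun i : Fin (m + 1) => u i) := by
          rw [closedPolySum_eq_chainAngleSum]
      _ ≤ closedTotalCurvature γ := le_csSup hbdd hmem

theorem closedPolySum_pair_eq_two_mul_pi {s t : ℝ} (h : γ s ≠ γ t) :
    closedPolySum γ ![s, t] = 2 * π := by
  have hv : γ t - γ s ≠ 0 := sub_ne_zero.2 h.symm
  have hts : angle (γ t - γ s) (γ s - γ t) = π := by
    rw [← neg_sub (γ t)]; exact angle_self_neg_of_nonzero hv
  have hst : angle (γ s - γ t) (γ t - γ s) = π := by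
    rw [← neg_sub (γ t)]; exact angle_neg_self_of_nonzero hv
  simp [closedPolySum, Fin.sum_univ_two, hts, hst, two_mul]

theorem two_mul_pi_le_closedTotalCurvature (hper : Function.Periodic γ 1)
    (hbdd : BddAbove (closedPolySums γ)) {a b : ℝ} (hab : γ a ≠ γ b) :
    2 * π ≤ closedTotalCurvature γ := by
  have hpair : ∀ s t, s ∈ Ico (0 : ℝ) 1 → t ∈ Ico (0 : ℝ) 1 → s < t → γ s ≠ γ t →
      2 * π ≤ closedTotalCurvature γ := fun s t hs ht hst h => by
    refine closedPolySum_pair_eq_two_mul_pi h ▸ le_csSup hbdd ⟨1, _, ?_, ?_, rfl⟩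
    · exact fun i j hij => by fin_cases i <;> fin_cases j <;> simp_all
    · exact (show t < s + 1 by linarith [ht.2, hs.1])
  obtain ⟨s, hs, hsa⟩ := hper.exists_mem_Ico₀ one_pos a
  obtain ⟨t, ht, htb⟩ := hper.exists_mem_Ico₀ one_pos b
  rw [hsa, htb] at hab
  rcases lt_or_gt_of_ne (fun h => hab (h ▸ rfl) : s ≠ t) with hst | hts
  · exact hpair s t hs ht hst hab
  · exact hpair t s ht hs hts hab.symm

theorem eVariationOn_Icc_zero_one_le (hper : Function.Periodic γ 1)
    (hbdd : BddAbove (closedPolySums γ)) (hγ : Bornology.IsBounded (range γ)) :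
    eVariationOn γ (Icc 0 1) ≤ ENNReal.ofReal (2 * Metric.diam (range γ) +
      6 / π * Metric.diam (range γ) * closedTotalCurvature γ) := by
  rw [eVariationOn.eVariationOn_eq_strictMonoOn]
  refine iSup_le fun ⟨n, u, hu, hus⟩ => ?_
  rcases n with _ | m
  · simp
  have hdist : ∀ i j, dist ((γ ∘ u) i) ((γ ∘ u) j) ≤ Metric.diam (range γ) := fun i j =>
    Metric.dist_le_diam_of_mem hγ (mem_range_self _) (mem_range_self _)
  have hwrap : u (m + 1) ≤ u 0 + 1 := by
    linarith [(hus (m + 1) (mem_Iic.2 le_rfl)).2, (hus 0 (mem_Iic.2 (Nat.zero_le _))).1]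
  have hK := chainAngleSum_le_closedTotalCurvature hper hbdd hu hwrap
  have hD := Metric.diam_nonneg (s := range γ)
  calc ∑ i ∈ Finset.range (m + 1), edist (γ (u (i + 1))) (γ (u i))
      = ENNReal.ofReal (∑ i ∈ Finset.range (m + 1), dist (γ (u (i + 1))) (γ (u i))) := by
        rw [ENNReal.ofReal_sum_of_nonneg fun _ _ => dist_nonneg]
        simp only [edist_dist]
    _ ≤ _ := by
      gcongr
      exact (sum_dist_le_chainAngleSum (γ ∘ u) m hdist).trans (by gcongr)

end Curve

/-- A compact connected closed curve `Γ` in `ℝ^N` of finite total curvature has finite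
length; quantitatively there is a constant `c_N > 0` depending only on the dimension `N`
such that `c_N · Length(Γ) ≤ diam(Γ) · TotalCurvature(Γ)` for every such curve.
The curve is parametrized by a continuous period-one map `γ : ℝ → ℝ^N`, its length is the
variation of `γ` over one period, and the inequality is stated in `ℝ≥0∞` so that it
includes the finiteness of the length. -/
theorem length_le_diam_mul_totalCurvature (N : ℕ) :
    ∃ c : ℝ, 0 < c ∧
      ∀ γ : ℝ → EuclideanSpace ℝ (Fin N), Continuous γ → (∀ t, γ (t + 1) = γ t) →
        BddAbove (closedPolySums γ) →
        ENNReal.ofReal c * eVariationOn γ (Set.Icc 0 1) ≤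
          ENNReal.ofReal (Metric.diam (Set.range γ) * closedTotalCurvature γ) := by
  refine ⟨π / 7, by positivity, fun γ hγ hper hbdd => ?_⟩
  have hbd := Function.Periodic.isBounded_of_continuous hper one_ne_zero hγ
  set D := Metric.diam (range γ)
  set K := closedTotalCurvature γ
  have hD : 0 ≤ D := Metric.diam_nonneg
  have hDK : π / 7 * (2 * D + 6 / π * D * K) ≤ D * K := by
    rcases (range γ).subsingleton_or_nontrivial with hconst | ⟨_, ⟨a, rfl⟩, _, ⟨b, rfl⟩, hab⟩
    · simp [D, Metric.diam_subsingleton hconst]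
    · have hK := two_mul_pi_le_closedTotalCurvature hper hbdd hab
      have : 2 * π * D ≤ K * D := mul_le_mul_of_nonneg_right hK hD
      field_simp
      nlinarith
  calc ENNReal.ofReal (π / 7) * eVariationOn γ (Icc 0 1)
      ≤ ENNReal.ofReal (π / 7) * ENNReal.ofReal (2 * D + 6 / π * D * K) := by
        gcongr
        exact eVariationOn_Icc_zero_one_le hper hbdd hbd
    _ = ENNReal.ofReal (π / 7 * (2 * D + 6 / π * D * K)) :=
        (ENNReal.ofReal_mul (by positivity)).symm
    _ ≤ ENNReal.ofReal (D * K) := ENNReal.ofReal_le_ofReal hDK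
end

section
/- Let Γ be a closed polygonal (or piecewise linear) curve in ℝ^N and p a point not on Γ. Then the length of the radial projection Π_p(Γ) onto the unit sphere centered at p is at most the total curvature of Γ, where Π_p(x) = p + (x-p)/‖x-p‖. -/
/-!
For points `x` before `y` on an edge `[a, b]`, the angle sum in the triangle `p x y` shows that
`∠ x p y` is the decrease of the angle between `x - p` and the edge direction. This angle
therefore moves monotonically, and since chords are shorter than arcs, the projected edge has
length at most `∠ a p b`. Summed over the edges, these differences telescope up to the change,
at each vertex, of the angle against the incoming versus the outgoing edge direction; by the
triangle inequality for angles that change is at most the exterior angle.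
-/

open Set InnerProductGeometry NormedSpace

theorem eVariationOn_le_of_edist_le {α E F : Type*} [LinearOrder α] [PseudoEMetricSpace E]
    [PseudoEMetricSpace F] {f : α → E} {g : α → F} {s : Set α}
    (h : ∀ x ∈ s, ∀ y ∈ s, x ≤ y → edist (f x) (f y) ≤ edist (g x) (g y)) :
    eVariationOn f s ≤ eVariationOn g s := by
  refine iSup_le fun ⟨n, u, hu, us⟩ => ?_
  calc ∑ i ∈ Finset.range n, edist (f (u (i + 1))) (f (u i))
      ≤ ∑ i ∈ Finset.range n, edist (g (u (i + 1))) (g (u i)) :=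
        Finset.sum_le_sum fun i _ => by
          rw [edist_comm, edist_comm (g _)]
          exact h _ (us i) _ (us (i + 1)) (hu (Nat.le_succ i))
    _ ≤ eVariationOn g s := eVariationOn.sum_le hu us

namespace InnerProductGeometry

variable {V : Type*} [NormedAddCommGroup V] [InnerProductSpace ℝ V]

theorem norm_sub_le_angle_of_norm_eq_one {x y : V} (hx : ‖x‖ = 1) (hy : ‖y‖ = 1) :
    ‖x - y‖ ≤ angle x y := by
  have hcos := norm_sub_sq_eq_norm_sq_add_norm_sq_sub_two_mul_norm_mul_norm_mul_cos_angle x y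
  rw [hx, hy] at hcos
  have := Real.one_sub_sq_div_two_le_cos (x := angle x y)
  refine (pow_le_pow_iff_left₀ (norm_nonneg _) (angle_nonneg x y) two_ne_zero).1 ?_
  linarith

theorem dist_normalize_le_angle {x y : V} (hx : x ≠ 0) (hy : y ≠ 0) :
    dist (normalize x) (normalize y) ≤ angle x y := by
  rw [dist_eq_norm, ← angle_normalize_left, ← angle_normalize_right]
  exact norm_sub_le_angle_of_norm_eq_one (norm_normalize hx) (norm_normalize hy)

theorem angle_eq_angle_sub_angle_of_sub_eq_smul {x y d : V} {c : ℝ} (hc : 0 < c) (hy : y ≠ 0)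
    (h : y - x = c • d) : angle x y = angle x d - angle y d := by
  have hsum := angle_add_angle_sub_add_angle_sub_eq_pi x hy
  rw [← neg_sub y x, h, angle_neg_right, angle_smul_right_of_pos _ _ hc,
    angle_smul_right_of_pos _ _ hc] at hsum
  linarith

theorem eVariationOn_radialProjection_segment_le {a b p : V}
    (hp : ∀ s ∈ Icc (0 : ℝ) 1, a + s • (b - a) ≠ p) :
    eVariationOn (fun s : ℝ => p + normalize (a + s • (b - a) - p)) (Icc 0 1) ≤
      ENNReal.ofReal (angle (a - p) (b - p)) := by
  set w : ℝ → V := fun s => a + s • (b - a) - p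
  have hw : ∀ s ∈ Icc (0 : ℝ) 1, w s ≠ 0 := fun s hs => sub_ne_zero.2 (hp s hs)
  set g : ℝ → ℝ := fun s => -angle (w s) (b - a)
  have hangle : ∀ s ∈ Icc (0 : ℝ) 1, ∀ t ∈ Icc (0 : ℝ) 1, s ≤ t →
      angle (w s) (w t) = g t - g s := by
    intro s hs t ht hst
    rcases hst.eq_or_lt with rfl | hlt
    · simp [angle_self (hw s hs)]
    rw [angle_eq_angle_sub_angle_of_sub_eq_smul (d := b - a) (sub_pos.2 hlt) (hw t ht)
      (by simp only [w]; module)]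
    ring
  have hg : MonotoneOn g (Icc 0 1) := fun s hs t ht hst =>
    sub_nonneg.1 (hangle s hs t ht hst ▸ angle_nonneg _ _)
  calc eVariationOn (fun s => p + normalize (w s)) (Icc 0 1)
      ≤ eVariationOn g (Icc 0 1) := eVariationOn_le_of_edist_le fun s hs t ht hst => by
        rw [edist_add_left, edist_dist, edist_dist, Real.dist_eq, abs_sub_comm,
          abs_of_nonneg (hangle s hs t ht hst ▸ angle_nonneg _ _), ← hangle s hs t ht hst]
        exact ENNReal.ofReal_le_ofReal (dist_normalize_le_angle (hw s hs) (hw t ht))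
    _ = ENNReal.ofReal (g 1 - g 0) := by
      simpa using hg.eVariationOn_eq (left_mem_Icc.2 zero_le_one) (right_mem_Icc.2 zero_le_one)
    _ = ENNReal.ofReal (angle (a - p) (b - p)) := by
      rw [← hangle 0 (left_mem_Icc.2 zero_le_one) 1 (right_mem_Icc.2 zero_le_one) zero_le_one]
      simp [w]

theorem sum_angle_sub_le_sum_angle_sub {m : ℕ} [NeZero m] (v : Fin m → V) {p : V}
    (hp : ∀ i, v i ≠ p) :
    ∑ i, angle (v i - p) (v (i + 1) - p) ≤
      ∑ i, angle (v (i + 1) - v i) (v (i + 1 + 1) - v (i + 1)) := by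
  set d : Fin m → V := fun i => v (i + 1) - v i
  have hreindex : ∑ i, angle (v i - p) (d i) = ∑ i, angle (v (i + 1) - p) (d (i + 1)) :=
    (Equiv.sum_comp (Equiv.addRight (1 : Fin m)) fun i => angle (v i - p) (d i)).symm
  calc ∑ i, angle (v i - p) (v (i + 1) - p)
      = ∑ i, angle (v i - p) (d i) - ∑ i, angle (v (i + 1) - p) (d i) := by
        rw [← Finset.sum_sub_distrib]
        exact Finset.sum_congr rfl fun i _ => angle_eq_angle_sub_angle_of_sub_eq_smul one_pos
          (sub_ne_zero.2 (hp (i + 1))) (by simp [d])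
    _ = ∑ i, (angle (v (i + 1) - p) (d (i + 1)) - angle (v (i + 1) - p) (d i)) := by
        rw [hreindex, Finset.sum_sub_distrib]
    _ ≤ ∑ i, angle (d i) (d (i + 1)) := Finset.sum_le_sum fun i _ => by
        linarith [angle_le_angle_add_angle (v (i + 1) - p) (d i) (d (i + 1))]

end InnerProductGeometry

theorem length_radial_projection_le_totalCurvature_polygon_general {N : ℕ} (n : ℕ)
    (v : Fin (n + 3) → EuclideanSpace ℝ (Fin N))
    (p : EuclideanSpace ℝ (Fin N))
    (hp : ∀ i, ∀ s ∈ Set.Icc (0 : ℝ) 1, v i + s • (v (i + 1) - v i) ≠ p) :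
    ∑ i : Fin (n + 3),
        eVariationOn
          (fun s : ℝ =>
            p + ‖(v i + s • (v (i + 1) - v i)) - p‖⁻¹ • ((v i + s • (v (i + 1) - v i)) - p))
          (Set.Icc 0 1) ≤
      ENNReal.ofReal
        (∑ i : Fin (n + 3),
          InnerProductGeometry.angle (v (i + 1) - v i) (v (i + 1 + 1) - v (i + 1))) := by
  have hvertex : ∀ i, v i ≠ p := fun i => by
    simpa using hp i 0 (left_mem_Icc.2 zero_le_one)
  -- `normalize x` unfolds to `‖x‖⁻¹ • x`
  calc _ ≤ ∑ i, ENNReal.ofReal (angle (v i - p) (v (i + 1) - p)) :=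
        Finset.sum_le_sum fun i _ => eVariationOn_radialProjection_segment_le (hp i)
    _ = ENNReal.ofReal (∑ i, angle (v i - p) (v (i + 1) - p)) :=
        (ENNReal.ofReal_sum_of_nonneg fun i _ => angle_nonneg _ _).symm
    _ ≤ _ := ENNReal.ofReal_le_ofReal (sum_angle_sub_le_sum_angle_sub v hvertex)

/-- Radial projection of a closed polygon: let `v 0, v 1, …` (cyclically indexed by
`Fin (n+3)`, so there are at least three vertices) be the vertices of a closed polygonal
curve in `ℝ^N` with nondegenerate edges, and let `p` be a point not on the polygon.
Then the length of the radial projection of the polygon to the unit sphere centered at `p`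
(the sum over the edges of the variation of the projected edge path, i.e. length counted
with multiplicity) is at most the total curvature of the polygon (the sum of the exterior
angles at its vertices). -/
theorem length_radial_projection_le_totalCurvature_polygon {N : ℕ} (n : ℕ)
    (v : Fin (n + 3) → EuclideanSpace ℝ (Fin N))
    (hedge : ∀ i, v (i + 1) ≠ v i)
    (p : EuclideanSpace ℝ (Fin N))
    (hp : ∀ i, ∀ s ∈ Set.Icc (0 : ℝ) 1, v i + s • (v (i + 1) - v i) ≠ p) :
    ∑ i : Fin (n + 3),
        eVariationOn
          (fun s : ℝ =>
            p + ‖(v i + s • (v (i + 1) - v i)) - p‖⁻¹ • ((v i + s • (v (i + 1) - v i)) - p))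
          (Set.Icc 0 1) ≤
      ENNReal.ofReal
        (∑ i : Fin (n + 3),
          InnerProductGeometry.angle (v (i + 1) - v i) (v (i + 1 + 1) - v (i + 1))) :=
  length_radial_projection_le_totalCurvature_polygon_general n v p hp
end

section
/- Let γ : [a,b] → ℝ^N be an injective continuous curve of finite total curvature κ(a,b) on (a,b). Then for all a ≤ x < y ≤ b, the angle between the chord direction T_{xy} = (γ(y)−γ(x))/‖γ(y)−γ(x)‖ and the overall chord direction T_{ab} = (γ(b)−γ(a))/‖γ(b)−γ(a)‖ is at most 2·κ(a,b). -/
open Set Filter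


/-!
If `κ < π / 2` (otherwise the bound is trivial, angles being at most `π`), the vectors making
an angle at most `κ` with a fixed nonzero `v` form a convex cone, since they are those `c` with
`‖c‖ ‖v‖ cos κ ≤ ⟪c, v⟫`. For parameters `p < x < y < q` in `(a, b)` the chord
`γ q - γ p = (γ x - γ p) + (γ y - γ x) + (γ q - γ y)` is a sum of three vectors within angle `κ`
of `γ y - γ x`, the outer two by the definition of `κ` applied to the triangles `p, x, y` and
`x, y, q`. Hence `angle (γ y - γ x) (γ q - γ p) ≤ κ`, and continuity of `γ` lets `p, q` tend to
`a, b` and `x, y` to arbitrary parameters in `[a, b]`.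
-/

open InnerProductGeometry Real

section PolygonSums

variable {E : Type*} [NormedAddCommGroup E] [InnerProductSpace ℝ E] {γ : ℝ → E} {s : Set ℝ}

lemma angle_mem_polySums {t₀ t₁ t₂ : ℝ} (h₀ : t₀ ∈ s) (h₁ : t₁ ∈ s) (h₂ : t₂ ∈ s)
    (h₀₁ : t₀ < t₁) (h₁₂ : t₁ < t₂) :
    angle (γ t₁ - γ t₀) (γ t₂ - γ t₁) ∈ polySums γ s := by
  refine ⟨1, ![t₀, t₁, t₂], ?_, ?_, ?_⟩
  · rw [Fin.strictMono_iff_lt_succ]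
    intro i
    fin_cases i <;> simpa
  · intro i
    fin_cases i <;> simpa
  · simp [polySum]

lemma zero_mem_polySums {t₀ t₁ : ℝ} (h₀ : t₀ ∈ s) (h₁ : t₁ ∈ s) (h₀₁ : t₀ < t₁) :
    (0 : ℝ) ∈ polySums γ s := by
  refine ⟨0, ![t₀, t₁], ?_, ?_, ?_⟩
  · rw [Fin.strictMono_iff_lt_succ]
    intro i
    fin_cases i
    simpa
  · intro i
    fin_cases i <;> simpa
  · simp [polySum]

lemma totalCurvatureOn_nonneg (hbdd : BddAbove (polySums γ s)) {t₀ t₁ : ℝ} (h₀ : t₀ ∈ s)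
    (h₁ : t₁ ∈ s) (h₀₁ : t₀ < t₁) : 0 ≤ totalCurvatureOn γ s :=
  le_csSup hbdd (zero_mem_polySums h₀ h₁ h₀₁)

lemma angle_le_totalCurvatureOn_s13 (hbdd : BddAbove (polySums γ s)) {t₀ t₁ t₂ : ℝ} (h₀ : t₀ ∈ s)
    (h₁ : t₁ ∈ s) (h₂ : t₂ ∈ s) (h₀₁ : t₀ < t₁) (h₁₂ : t₁ < t₂) :
    angle (γ t₁ - γ t₀) (γ t₂ - γ t₁) ≤ totalCurvatureOn γ s :=
  le_csSup hbdd (angle_mem_polySums h₀ h₁ h₂ h₀₁ h₁₂)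

end PolygonSums

section AngleCone

variable {V : Type*} [NormedAddCommGroup V] [InnerProductSpace ℝ V]

lemma norm_mul_norm_mul_cos_le_inner {c v : V} {κ : ℝ} (h : angle c v ≤ κ) (hκ : κ ≤ π) :
    ‖c‖ * ‖v‖ * cos κ ≤ inner ℝ c v := by
  rw [← cos_angle_mul_norm_mul_norm, mul_comm]
  exact mul_le_mul_of_nonneg_right (cos_le_cos_of_nonneg_of_le_pi (angle_nonneg c v) hκ h)
    (by positivity)

lemma angle_sum_le_of_forall_angle_le {ι : Type*} (S : Finset ι) (c : ι → V) {v : V} {κ : ℝ}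
    (hv : v ≠ 0) (hS : ∑ i ∈ S, c i ≠ 0) (hκ₀ : 0 ≤ κ) (hκ : κ ≤ π / 2)
    (h : ∀ i ∈ S, angle (c i) v ≤ κ) : angle (∑ i ∈ S, c i) v ≤ κ := by
  have hcos : 0 ≤ cos κ := cos_nonneg_of_mem_Icc ⟨by linarith [pi_pos], hκ⟩
  have hinner : ‖∑ i ∈ S, c i‖ * ‖v‖ * cos κ ≤ inner ℝ (∑ i ∈ S, c i) v :=
    calc ‖∑ i ∈ S, c i‖ * ‖v‖ * cos κ ≤ (∑ i ∈ S, ‖c i‖) * ‖v‖ * cos κ := by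
          gcongr
          exact norm_sum_le S c
      _ = ∑ i ∈ S, ‖c i‖ * ‖v‖ * cos κ := by rw [Finset.sum_mul, Finset.sum_mul]
      _ ≤ ∑ i ∈ S, inner ℝ (c i) v := Finset.sum_le_sum fun i hi ↦
          norm_mul_norm_mul_cos_le_inner (h i hi) (by linarith [pi_pos])
      _ = inner ℝ (∑ i ∈ S, c i) v := (sum_inner S c v).symm
  rw [← cos_angle_mul_norm_mul_norm, mul_comm (cos _)] at hinner
  have hcos_le : cos κ ≤ cos (angle (∑ i ∈ S, c i) v) :=
    le_of_mul_le_mul_left hinner (by positivity)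
  exact (strictAntiOn_cos.le_iff_ge ⟨hκ₀, by linarith [pi_pos]⟩
    ⟨angle_nonneg _ _, angle_le_pi _ _⟩).mp hcos_le

end AngleCone

section ChordAngles

variable {E : Type*} [NormedAddCommGroup E] [InnerProductSpace ℝ E] {γ : ℝ → E}

lemma angle_chord_le_totalCurvatureOn {s : Set ℝ} (hbdd : BddAbove (polySums γ s))
    (hκ : totalCurvatureOn γ s ≤ π / 2) {p x y q : ℝ} (hp : p ∈ s) (hx : x ∈ s) (hy : y ∈ s)
    (hq : q ∈ s) (hpx : p < x) (hxy : x < y) (hyq : y < q) (hγxy : γ x ≠ γ y)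
    (hγpq : γ p ≠ γ q) :
    angle (γ y - γ x) (γ q - γ p) ≤ totalCurvatureOn γ s := by
  have hsplit : γ q - γ p = ∑ i : Fin 3, ![γ x - γ p, γ y - γ x, γ q - γ y] i := by
    simp only [Fin.sum_univ_three, Matrix.cons_val]
    abel
  rw [angle_comm, hsplit]
  refine angle_sum_le_of_forall_angle_le _ _ (sub_ne_zero.2 hγxy.symm)
    (hsplit ▸ sub_ne_zero.2 hγpq.symm) (totalCurvatureOn_nonneg hbdd hp hx hpx) hκ ?_
  intro i _
  fin_cases i
  · exact angle_le_totalCurvatureOn_s13 hbdd hp hx hy hpx hxy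
  · simpa [angle_self (sub_ne_zero.2 hγxy.symm)] using totalCurvatureOn_nonneg hbdd hp hx hpx
  · simpa [angle_comm] using angle_le_totalCurvatureOn_s13 hbdd hx hy hq hxy hyq

lemma angle_chord_le_of_forall_interior {a b κ : ℝ} (hcont : ContinuousOn γ (Icc a b))
    (h : ∀ p x y q, a < p → p < x → x < y → y < q → q < b → angle (γ y - γ x) (γ q - γ p) ≤ κ)
    {x y : ℝ} (hx : a ≤ x) (hxy : x < y) (hy : y ≤ b) (hγxy : γ x ≠ γ y) (hγab : γ a ≠ γ b) :
    angle (γ y - γ x) (γ b - γ a) ≤ κ := by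
  obtain ⟨r, hr_def⟩ : ∃ r, r = (y - x) / 4 := ⟨_, rfl⟩
  have hr : 0 < r := by linarith
  -- For `0 < ε < r` the parameters `a + ε < x + 2ε < y - 2ε < b - ε` lie inside `(a, b)`.
  have hchord : ∀ f g : ℝ → ℝ, Continuous f → Continuous g → MapsTo f (Ico 0 r) (Icc a b) →
      MapsTo g (Ico 0 r) (Icc a b) → ContinuousOn (fun ε ↦ γ (g ε) - γ (f ε)) (Ico 0 r) :=
    fun f g hf hg hfm hgm ↦ (hcont.comp hg.continuousOn hgm).sub (hcont.comp hf.continuousOn hfm)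
  have hinner : ContinuousOn (fun ε ↦ γ (y - 2 * ε) - γ (x + 2 * ε)) (Ico 0 r) :=
    hchord _ _ (by fun_prop) (by fun_prop)
      (fun _ ⟨_, _⟩ ↦ ⟨by linarith, by linarith⟩) (fun _ ⟨_, _⟩ ↦ ⟨by linarith, by linarith⟩)
  have houter : ContinuousOn (fun ε ↦ γ (b - ε) - γ (a + ε)) (Ico 0 r) :=
    hchord _ _ (by fun_prop) (by fun_prop)
      (fun _ ⟨_, _⟩ ↦ ⟨by linarith, by linarith⟩) (fun _ ⟨_, _⟩ ↦ ⟨by linarith, by linarith⟩)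
  have hangle : ContinuousWithinAt
      (fun ε ↦ angle (γ (y - 2 * ε) - γ (x + 2 * ε)) (γ (b - ε) - γ (a + ε))) (Ioo 0 r) 0 := by
    have hat : ContinuousAt (fun z : E × E ↦ angle z.1 z.2) (γ y - γ x, γ b - γ a) :=
      continuousAt_angle (sub_ne_zero.2 hγxy.symm) (sub_ne_zero.2 hγab.symm)
    have hval : (γ (y - 2 * 0) - γ (x + 2 * 0), γ (b - 0) - γ (a + 0)) =
        (γ y - γ x, γ b - γ a) := by simp
    exact (hat.comp_continuousWithinAt_of_eq
      ((hinner.prodMk houter 0 ⟨le_rfl, hr⟩).mono Ioo_subset_Ico_self) hval :)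
  have hclosure : (0 : ℝ) ∈ closure (Ioo 0 r) := by
    rw [closure_Ioo hr.ne]
    exact left_mem_Icc.2 hr.le
  have hle := hangle.closure_le hclosure continuousWithinAt_const fun _ ⟨_, _⟩ ↦
    h _ _ _ _ (by linarith) (by linarith) (by linarith) (by linarith) (by linarith)
  simpa using hle

end ChordAngles

/-- If `γ : [a,b] → ℝ^N` is an injective continuous curve of finite total curvature
`κ(a,b)` on `(a,b)`, then for all `a ≤ x < y ≤ b` the angle between the chord direction
`T_{xy} = (γ y - γ x)/‖γ y - γ x‖` and the overall chord direction
`T_{ab} = (γ b - γ a)/‖γ b - γ a‖` is at most `2 · κ(a,b)`.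
(The angle between nonzero vectors is unchanged by normalization.) -/
theorem angle_chord_overall_le_two_totalCurvature {N : ℕ} (a b : ℝ) (hab : a < b)
    (γ : ℝ → EuclideanSpace ℝ (Fin N))
    (hcont : ContinuousOn γ (Set.Icc a b))
    (hinj : Set.InjOn γ (Set.Icc a b))
    (hfin : BddAbove (polySums γ (Set.Ioo a b)))
    (x y : ℝ) (hx : a ≤ x) (hxy : x < y) (hy : y ≤ b) :
    InnerProductGeometry.angle (γ y - γ x) (γ b - γ a) ≤
      2 * totalCurvatureOn γ (Set.Ioo a b) := by
  set κ := totalCurvatureOn γ (Ioo a b)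
  rcases le_or_gt (π / 2) κ with hbig | hsmall
  · linarith [angle_le_pi (γ y - γ x) (γ b - γ a)]
  have hκ₀ : 0 ≤ κ := totalCurvatureOn_nonneg hfin (t₀ := (2 * a + b) / 3)
    (t₁ := (a + 2 * b) / 3) ⟨by linarith, by linarith⟩ ⟨by linarith, by linarith⟩ (by linarith)
  have hγne : ∀ {s t}, s ∈ Icc a b → t ∈ Icc a b → s < t → γ s ≠ γ t :=
    fun hs ht hst ↦ hinj.ne hs ht hst.ne
  have hinterior : ∀ p x' y' q, a < p → p < x' → x' < y' → y' < q → q < b →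
      angle (γ y' - γ x') (γ q - γ p) ≤ κ := fun p x' y' q hp hpx hxy hyq hq ↦
    angle_chord_le_totalCurvatureOn hfin hsmall.le ⟨hp, by linarith⟩ ⟨by linarith, by linarith⟩
      ⟨by linarith, by linarith⟩ ⟨by linarith, hq⟩ hpx hxy hyq
      (hγne ⟨by linarith, by linarith⟩ ⟨by linarith, by linarith⟩ hxy)
      (hγne ⟨hp.le, by linarith⟩ ⟨by linarith, hq.le⟩ (by linarith))
  have hbound := angle_chord_le_of_forall_interior hcont hinterior hx hxy hy
    (hγne ⟨hx, by linarith⟩ ⟨by linarith, hy⟩ hxy) (hγne ⟨le_rfl, hab.le⟩ ⟨hab.le, le_rfl⟩ hab)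
  linarith
end
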